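/- arXiv:1512.03130 — 10 statements merged into one kernel-verified Lean document; each statement's English description precedes it below -/
import Mathlib

section
/- Let G be a group (written multiplicatively), let A be a nonempty subset of G, let c be an element of the normalizer N_G(A) = {c ∈ G : cA = Ac}, and let r and ℓ be positive integers. If A is an asymptotic (r,ℓ)-approximate group, then the translate cA is an asymptotic (r,ℓ)-approximate group. -/
open Pointwise

lemma pow_comm_of_comm {G : Type*} [Group G] (A : Set G) (c : G)
    (hc : ({c} : Set G) * A = A * ({c} : Set G)) :
    ∀ n : ℕ, ({c} : Set G) * A ^ n = A ^ n * ({c} : Set G) := by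
  intro n
  induction n with
  | zero => simp
  | succ n ih =>
    rw [pow_succ, ← mul_assoc, ih, mul_assoc, hc, ← mul_assoc]

lemma translate_pow {G : Type*} [Group G] (A : Set G) (c : G)
    (hc : ({c} : Set G) * A = A * ({c} : Set G)) :
    ∀ n : ℕ, (({c} : Set G) * A) ^ n = ({c ^ n} : Set G) * A ^ n := by
  intro n
  induction n with
  | zero => simp [Set.singleton_one]
  | succ n ih =>
    rw [pow_succ, ih, pow_succ]
    calc ({c ^ n} : Set G) * A ^ n * (({c} : Set G) * A)
        = ({c ^ n} : Set G) * ((A ^ n * ({c} : Set G)) * A) := by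
          simp only [mul_assoc]
      _ = ({c ^ n} : Set G) * ((({c} : Set G) * A ^ n) * A) := by
          rw [pow_comm_of_comm A c hc n]
      _ = (({c ^ n} : Set G) * ({c} : Set G)) * (A ^ n * A) := by
          simp only [mul_assoc]
      _ = ({c ^ n * c} : Set G) * A ^ (n + 1) := by
          rw [Set.singleton_mul_singleton, pow_succ]

/-- If `A` is an asymptotic `(r,ℓ)`-approximate group and `c` normalizes `A` (i.e. `cA = Ac`),
then the translate `cA` is an asymptotic `(r,ℓ)`-approximate group. -/
theorem translate_asymptotic_approximate_group {G : Type*} [Group G] (A : Set G)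
    (hA : A.Nonempty) (c : G) (hc : ({c} : Set G) * A = A * ({c} : Set G))
    (r ℓ : ℕ) (hr : 0 < r) (hℓ : 0 < ℓ)
    (h : ∃ h₀ : ℕ, ∀ h' : ℕ, h₀ ≤ h' →
      ∃ X : Finset G, X.card ≤ ℓ ∧ A ^ (h' * r) ⊆ ↑X * A ^ h') :
    ∃ h₀ : ℕ, ∀ h' : ℕ, h₀ ≤ h' →
      ∃ X : Finset G, X.card ≤ ℓ ∧
        (({c} : Set G) * A) ^ (h' * r) ⊆ ↑X * (({c} : Set G) * A) ^ h' := by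
  classical
  obtain ⟨h₀, hh⟩ := h
  refine ⟨h₀, fun h' hh' => ?_⟩
  obtain ⟨X, hXcard, hXA⟩ := hh h' hh'
  refine ⟨X.image (fun x => c ^ (h' * r) * x * (c ^ h')⁻¹),
    le_trans (Finset.card_image_le) hXcard, ?_⟩
  rw [translate_pow A c hc, translate_pow A c hc]
  rintro g hg
  rw [Set.mem_mul] at hg
  obtain ⟨u, hu, a, ha, rfl⟩ := hg
  rw [Set.mem_singleton_iff] at hu
  subst hu
  obtain ⟨x, hx, b, hb, rfl⟩ := hXA ha
  refine ⟨c ^ (h' * r) * x * (c ^ h')⁻¹, ?_, c ^ h' * b, ⟨c ^ h', rfl, b, hb, rfl⟩, ?_⟩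
  · simp only [Finset.coe_image, Set.mem_image]
    exact ⟨x, hx, rfl⟩
  · group
end

section
/- Let G_0 be a finite group with |G_0| = n_0, let G_1 be a group, and let π_1 : G_0 × G_1 → G_1 be the projection homomorphism π_1(u_0,u_1) = u_1. Let A be a nonempty subset of G_0 × G_1, and let r and ℓ be positive integers. If π_1(A) is an asymptotic (r,ℓ)-approximate group in G_1, then A is an asymptotic (r, n_0 ℓ)-approximate group in G_0 × G_1. -/
open Pointwise

/-- If `G₀` is a finite group with `n₀` elements and the projection `π₁(A)` of
`A ⊆ G₀ × G₁` to `G₁` is an asymptotic `(r,ℓ)`-approximate group, then `A` is an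
asymptotic `(r, n₀ℓ)`-approximate group in `G₀ × G₁`. -/
theorem projection_asymptotic_approximate_group {G₀ G₁ : Type*} [Group G₀] [Fintype G₀]
    [Group G₁] (n₀ : ℕ) (hn₀ : Fintype.card G₀ = n₀)
    (A : Set (G₀ × G₁)) (hA : A.Nonempty) (r ℓ : ℕ) (hr : 0 < r) (hℓ : 0 < ℓ)
    (h : ∃ h₀ : ℕ, ∀ h' : ℕ, h₀ ≤ h' →
      ∃ X : Finset G₁, X.card ≤ ℓ ∧ (Prod.snd '' A) ^ (h' * r) ⊆ ↑X * (Prod.snd '' A) ^ h') :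
    ∃ h₀ : ℕ, ∀ h' : ℕ, h₀ ≤ h' →
      ∃ X : Finset (G₀ × G₁), X.card ≤ n₀ * ℓ ∧ A ^ (h' * r) ⊆ ↑X * A ^ h' := by
  obtain ⟨h₀, hh₀⟩ := h
  refine ⟨h₀, fun h' hh' => ?_⟩
  obtain ⟨X, hXcard, hX⟩ := hh₀ h' hh'
  refine ⟨(Finset.univ : Finset G₀) ×ˢ X, ?_, ?_⟩
  · rw [Finset.card_product, Finset.card_univ, hn₀]
    exact Nat.mul_le_mul_left _ hXcard
  · intro p hp
    have hsnd : p.2 ∈ ↑X * (Prod.snd '' A) ^ h' := by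
      apply hX
      have := Set.image_pow (MonoidHom.snd G₀ G₁) A (h' * r)
      have hp2 : p.2 ∈ Prod.snd '' (A ^ (h' * r)) := ⟨p, hp, rfl⟩
      rw [show (Prod.snd : G₀ × G₁ → G₁) = ⇑(MonoidHom.snd G₀ G₁) from rfl] at hp2 ⊢
      rwa [this] at hp2
    obtain ⟨x, hx, b, hb, hxb⟩ := hsnd
    rw [show ((Prod.snd : G₀ × G₁ → G₁) '' A) = ⇑(MonoidHom.snd G₀ G₁) '' A from rfl,
      ← Set.image_pow] at hb
    obtain ⟨q, hq, hqb⟩ := hb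
    refine ⟨(p.1 * q.1⁻¹, x), ?_, q, hq, ?_⟩
    · simp [hx]
    · have hqb2 : q.2 = b := hqb
      ext <;> simp [hqb2, ← hxb]
end

section
/- Let G be the free group of rank 2 and let A = {a_0, a_1} be a set of free generators of G. Then for all integers r ≥ 2 and ℓ ≥ 1, the set A is not an asymptotic (r,ℓ)-approximate group; that is, for every integer h_0 there exists an integer h ≥ h_0 such that no subset X_h of G with |X_h| ≤ ℓ satisfies A^{hr} ⊆ X_h A^h. -/
/-!
Positive words in free generators are reduced, so distinct ones are distinct group elements and
`|A^n| = 2^n`. Hence `|A^{hr}| = 2^{hr}`, while `|X·A^h| ≤ ℓ·2^h`, which is smaller once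
`2^h > ℓ` and `r ≥ 2`.
-/

open Pointwise Finset

namespace FreeGroup
variable {α : Type*} {L₁ L₂ : List (α × Bool)}

theorem isReduced_map_true (l : List α) : IsReduced (l.map (·, true)) :=
  (List.isChain_map _).2 (List.pairwise_of_forall fun _ _ _ => rfl).isChain

theorem IsReduced.eq_of_mk_eq (h₁ : IsReduced L₁) (h₂ : IsReduced L₂) (h : mk L₁ = mk L₂) :
    L₁ = L₂ := by
  obtain ⟨L, hL₁, hL₂⟩ := Red.exact.1 h
  rw [← h₁.red_iff_eq.1 hL₁, h₂.red_iff_eq.1 hL₂]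

theorem prod_map_of (l : List α) : (l.map of).prod = mk (l.map (·, true)) := by
  induction l with
  | nil => rfl
  | cons a l ih => simp only [List.map_cons, List.prod_cons, ih, of, mul_mk]; rfl

theorem prod_map_of_injective : Function.Injective fun l : List α => (l.map of).prod := by
  intro l₁ l₂ h
  have := (isReduced_map_true l₁).eq_of_mk_eq (isReduced_map_true l₂) <| by
    simpa only [prod_map_of] using h
  exact List.map_injective_iff.2 (fun a b hab => by simpa using hab) this

theorem card_image_of_pow [DecidableEq α] (s : Finset α) (n : ℕ) :
    (s.image of ^ n).card = s.card ^ n := by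
  refine le_antisymm (card_pow_le.trans (by gcongr; exact card_image_le)) ?_
  have hinj : Function.Injective fun w : Fin n → α => (List.ofFn (of ∘ w)).prod := by
    intro w₁ w₂ h
    simp only [← List.map_ofFn] at h
    exact List.ofFn_injective (prod_map_of_injective h)
  rw [← Fintype.card_piFinset_const]
  refine card_le_card_of_injOn _ (fun w hw => mem_pow.2 ?_) hinj.injOn
  exact ⟨fun i => ⟨of (w i), mem_image_of_mem _ (Fintype.mem_piFinset.1 hw i)⟩, rfl⟩

end FreeGroup

theorem Nat.mul_pow_lt_pow_mul_of_lt {b h r ℓ : ℕ} (hb : 1 ≤ b) (hr : 2 ≤ r) (hℓ : ℓ < b ^ h) :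
    ℓ * b ^ h < b ^ (h * r) :=
  calc ℓ * b ^ h < b ^ h * b ^ h := Nat.mul_lt_mul_of_pos_right hℓ (Nat.zero_lt_of_lt hℓ)
    _ = b ^ (h * 2) := by rw [← pow_add, mul_two]
    _ ≤ b ^ (h * r) := Nat.pow_le_pow_right hb (Nat.mul_le_mul_left h hr)

theorem free_generators_not_asymptotic_approximate_group_general
    (A : Set (FreeGroup (Fin 2))) (hA : A = {FreeGroup.of 0, FreeGroup.of 1})
    (r ℓ : ℕ) (hr : 2 ≤ r) (h₀ : ℕ) :
    ∃ h : ℕ, h₀ ≤ h ∧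
      ∀ X : Finset (FreeGroup (Fin 2)), X.card ≤ ℓ → ¬(A ^ (h * r) ⊆ ↑X * A ^ h) := by
  set B : Finset (FreeGroup (Fin 2)) := univ.image FreeGroup.of
  have hAB : A = B := by ext; simp [hA, B, Fin.exists_fin_two, eq_comm]
  have hB (n : ℕ) : (B ^ n).card = 2 ^ n := by simp [B, FreeGroup.card_image_of_pow]
  set h := max h₀ ℓ + 1
  have hℓ : ℓ < 2 ^ h := ℓ.lt_two_pow_self.trans_le (Nat.pow_le_pow_right two_pos (by omega))
  refine ⟨h, by omega, fun X hX hsub => ?_⟩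
  rw [hAB, ← coe_pow, ← coe_pow, ← coe_mul, coe_subset] at hsub
  refine (Nat.mul_pow_lt_pow_mul_of_lt one_le_two hr hℓ).not_ge ?_
  calc 2 ^ (h * r) = (B ^ (h * r)).card := (hB _).symm
    _ ≤ (X * B ^ h).card := card_le_card hsub
    _ ≤ X.card * (B ^ h).card := card_mul_le
    _ ≤ ℓ * 2 ^ h := by rw [hB]; gcongr

/-- In the free group of rank 2, the set `A = {a₀, a₁}` of free generators is not an
asymptotic `(r,ℓ)`-approximate group for any integers `r ≥ 2` and `ℓ ≥ 1`: for every
`h₀` there is `h ≥ h₀` such that no set `X` with `|X| ≤ ℓ` satisfies `A^{hr} ⊆ X·A^h`. -/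
theorem free_generators_not_asymptotic_approximate_group
    (A : Set (FreeGroup (Fin 2))) (hA : A = {FreeGroup.of 0, FreeGroup.of 1})
    (r ℓ : ℕ) (hr : 2 ≤ r) (hℓ : 1 ≤ ℓ) (h₀ : ℕ) :
    ∃ h : ℕ, h₀ ≤ h ∧
      ∀ X : Finset (FreeGroup (Fin 2)), X.card ≤ ℓ → ¬(A ^ (h * r) ⊆ ↑X * A ^ h) :=
  free_generators_not_asymptotic_approximate_group_general A hA r ℓ hr h₀
end

section
/- Let A be a finite subset of a real vector space V with |A| = k ≥ 2, let S(A) = ⋃_{h≥1} hA be the subsemigroup of V generated by A, and let K = conv(A) be the convex hull of A. Then for every integer r ≥ 2 there exists a set X_r ⊆ S(A) such that |X_r| ≤ b(r,k) and rK ⊆ (1/(k-1))∗X_r + K, where b(r,k) is the binomial coefficient C((r+1)(k-1)-1, k-1). In particular, K is an (r, b(r,k))-approximate group in the additive group V. -/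
open Pointwise

/-- The `h`-fold sumset `hA = {a₁ + ⋯ + a_h : aᵢ ∈ A}`. -/
def hsum {V : Type*} [AddCommMonoid V] (h : ℕ) (A : Set V) : Set V :=
  {z | ∃ f : Fin h → V, (∀ i, f i ∈ A) ∧ z = ∑ i, f i}

/-- The subsemigroup `S(A) = ⋃_{h ≥ 1} hA` generated by `A`. -/
def semigroupGen {V : Type*} [AddCommMonoid V] (A : Set V) : Set V :=
  ⋃ h ∈ Set.Ici (1 : ℕ), hsum h A

/-- The binomial coefficient `b(r,k) = C((r+1)(k-1)-1, k-1)`. -/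
def b (r k : ℕ) : ℕ := Nat.choose ((r + 1) * (k - 1) - 1) (k - 1)

/-!
Put `n = k - 1`. A point of `rK` has the form `∑_{a ∈ A} c_a a` with `c_a ≥ 0` and `∑ c_a = r`.
Rounding the `n c_a` down to integers loses less than `k = n + 1` in total, so one can choose
integers `m_a ≤ n c_a` with `∑ m_a = n (r - 1)` exactly. Then `x = ∑ m_a a` lies in the
`n (r - 1)`-fold sumset of `A`, and the remainder `∑ (c_a - m_a / n) a` has nonnegative
coefficients summing to `r - (r - 1) = 1`, so it lies in `K`. The `n (r - 1)`-fold sumset of `A`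
has at most `C(k + n(r-1) - 1, n(r-1)) = C(nr, n) ≤ C((r+1)n - 1, n)` elements.
-/

section Sumset

variable {V : Type*} [AddCommMonoid V]

lemma Multiset.sum_mem_hsum {A : Set V} (μ : Multiset V) (hμ : ∀ a ∈ μ, a ∈ A) :
    μ.sum ∈ hsum (Multiset.card μ) A := by
  induction μ using Quot.inductionOn with
  | h l => exact ⟨fun i => l[i], fun i => hμ _ (List.getElem_mem _), (Fin.sum_univ_getElem l).symm⟩

lemma hsum_subset_semigroupGen {A : Set V} {N : ℕ} (hN : 1 ≤ N) : hsum N A ⊆ semigroupGen A :=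
  Set.subset_biUnion_of_mem (u := fun h => hsum h A) (Set.mem_Ici.2 hN)

variable [DecidableEq V]

def hsumFinset (N : ℕ) (T : Finset V) : Finset V :=
  Finset.univ.image fun σ : Sym T N => ((σ : Multiset T).map Subtype.val).sum

lemma coe_hsumFinset_subset (N : ℕ) (T : Finset V) : ↑(hsumFinset N T) ⊆ hsum N (T : Set V) := by
  intro x hx
  obtain ⟨σ, -, rfl⟩ := Finset.mem_image.1 hx
  simpa [σ.2] using Multiset.sum_mem_hsum (A := (T : Set V)) ((σ : Multiset T).map Subtype.val)
    (by simp +contextual)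

lemma card_hsumFinset_le (N : ℕ) (T : Finset V) :
    (hsumFinset N T).card ≤ (T.card + N - 1).choose N := by
  calc (hsumFinset N T).card ≤ Fintype.card (Sym T N) := Finset.card_image_le
    _ = (T.card + N - 1).choose N := by rw [Sym.card_sym_eq_choose, Fintype.card_coe]

lemma sum_nsmul_mem_hsumFinset {N : ℕ} {T : Finset V} (m : V → ℕ) (hm : ∑ a ∈ T, m a = N) :
    ∑ a ∈ T, m a • a ∈ hsumFinset N T := by
  set μ : Multiset T := ∑ a ∈ T.attach, Multiset.replicate (m a) a
  have hμ : Multiset.card μ = N := by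
    simp only [μ, Multiset.card_sum, Multiset.card_replicate, Finset.sum_attach T m, hm]
  refine Finset.mem_image.2 ⟨⟨μ, hμ⟩, Finset.mem_univ _, ?_⟩
  change (Multiset.mapAddMonoidHom Subtype.val μ).sum = _
  simp only [μ, map_sum, Multiset.sum_sum, Multiset.mapAddMonoidHom_apply, Multiset.map_replicate,
    Multiset.sum_replicate]
  exact Finset.sum_attach T fun a => m a • a

end Sumset

lemma hsum_subset_smul {V : Type*} [AddCommGroup V] [Module ℝ V] {K : Set V} (hK : Convex ℝ K)
    {r : ℕ} (hr : 0 < r) : hsum r K ⊆ (r : ℝ) • K := by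
  rintro _ ⟨f, hf, rfl⟩
  have hr' : (r : ℝ) ≠ 0 := by positivity
  refine ⟨∑ i, (r : ℝ)⁻¹ • f i, hK.sum_mem (fun _ _ => by positivity) ?_ fun i _ => hf i, ?_⟩
  · simp [Finset.card_univ, hr']
  · simp [← Finset.smul_sum, smul_smul, hr']

lemma Finset.exists_le_sum_eq_of_le_sum {α : Type*} (s : Finset α) (m : α → ℕ) {D : ℕ}
    (hD : D ≤ ∑ a ∈ s, m a) : ∃ d : α → ℕ, (∀ a, d a ≤ m a) ∧ ∑ a ∈ s, d a = D := by
  classical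
  induction s using Finset.cons_induction generalizing D with
  | empty => exact ⟨0, fun _ => Nat.zero_le _, by simpa using (hD.antisymm (Nat.zero_le _)).symm⟩
  | cons a s ha ih =>
    rw [Finset.sum_cons] at hD
    obtain ⟨d, hdm, hdD⟩ := ih (D := D - min D (m a)) (by omega)
    refine ⟨Function.update d a (min D (m a)), fun x => ?_, ?_⟩
    · rcases eq_or_ne x a with rfl | hx
      · simp
      · simpa [Function.update_of_ne hx] using hdm x
    · rw [Finset.sum_cons, Function.update_self,
        Finset.sum_congr rfl fun x hx => Function.update_of_ne (ne_of_mem_of_not_mem hx ha) _ d,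
        hdD]
      omega

lemma Finset.exists_nat_le_sum_eq {α : Type*} {s : Finset α} (hs : s.Nonempty) {c : α → ℝ}
    (hc : ∀ a ∈ s, 0 ≤ c a) {N : ℕ} (hN : (N : ℝ) + s.card ≤ ∑ a ∈ s, c a + 1) :
    ∃ m : α → ℕ, (∀ a ∈ s, (m a : ℝ) ≤ c a) ∧ ∑ a ∈ s, m a = N := by
  have hfloor : (N : ℝ) < ∑ a ∈ s, (⌊c a⌋₊ : ℝ) + 1 := by
    have := Finset.sum_lt_sum_of_nonempty hs fun a _ => Nat.lt_floor_add_one (c a)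
    rw [Finset.sum_add_distrib, Finset.sum_const, nsmul_one] at this
    linarith
  have hle : N ≤ ∑ a ∈ s, ⌊c a⌋₊ := Nat.lt_add_one_iff.1 (by exact_mod_cast hfloor)
  obtain ⟨m, hm, hmN⟩ := s.exists_le_sum_eq_of_le_sum _ hle
  exact ⟨m, fun a ha => ((Nat.cast_le.2 (hm a)).trans (Nat.floor_le (hc a ha))), hmN⟩

lemma exists_smul_mem_hsumFinset_add_mem_convexHull {V : Type*} [AddCommGroup V] [Module ℝ V]
    [DecidableEq V] {T : Finset V} {n : ℕ} (hn : 0 < n) (hT : T.card ≤ n + 1) (r : ℕ) {w : V}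
    (hw : w ∈ convexHull ℝ (T : Set V)) :
    ∃ x ∈ hsumFinset (n * r) T, ∃ y ∈ convexHull ℝ (T : Set V),
      ((r : ℝ) + 1) • w = (n : ℝ)⁻¹ • x + y := by
  obtain ⟨a, ha0, ha1, rfl⟩ := Finset.mem_convexHull'.1 hw
  have hn' : (0 : ℝ) < n := by exact_mod_cast hn
  have hT0 : T.Nonempty := Finset.nonempty_of_sum_ne_zero (by rw [ha1]; exact one_ne_zero)
  obtain ⟨m, hm, hmN⟩ := Finset.exists_nat_le_sum_eq hT0 (c := fun v => n * ((r + 1) * a v))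
    (fun v hv => by have := ha0 v hv; positivity) (N := n * r) (by
      rw [← Finset.mul_sum, ← Finset.mul_sum, ha1]
      have : (T.card : ℝ) ≤ n + 1 := by exact_mod_cast hT
      push_cast; linarith)
  set θ : V → ℝ := fun v => (r + 1) * a v - (n : ℝ)⁻¹ * m v
  have hθ0 : ∀ v ∈ T, 0 ≤ θ v := fun v hv => by
    simpa only [θ, sub_nonneg, inv_mul_le_iff₀ hn'] using hm v hv
  have hθ1 : ∑ v ∈ T, θ v = 1 := by
    have : ∑ v ∈ T, (m v : ℝ) = n * r := by exact_mod_cast hmN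
    simp only [θ, Finset.sum_sub_distrib, ← Finset.mul_sum, ha1, this]
    field_simp
    ring
  refine ⟨_, sum_nsmul_mem_hsumFinset m hmN, ∑ v ∈ T, θ v • v,
    (Finset.mem_convexHull'.2 ⟨θ, hθ0, hθ1, rfl⟩), ?_⟩
  simp only [Finset.smul_sum, ← Nat.cast_smul_eq_nsmul ℝ, smul_smul, ← Finset.sum_add_distrib,
    ← add_smul, θ]
  exact Finset.sum_congr rfl fun v _ => by rw [add_sub_cancel]

lemma choose_le_b (n s : ℕ) : (n + 1 + n * s - 1).choose (n * s) ≤ b (s + 1) (n + 1) := by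
  rw [show n + 1 + n * s - 1 = n * s + n by omega, Nat.choose_symm_add, b, Nat.add_sub_cancel]
  rcases n.eq_zero_or_pos with rfl | hn
  · simp
  · exact Nat.choose_le_choose n (by rw [show (s + 1 + 1) * n = n * s + n + n by ring]; omega)

/-- For a finite subset `A` of a real vector space with `|A| = k ≥ 2` and `K = conv(A)`,
for every `r ≥ 2` there is a set `X_r ⊆ S(A)` with `|X_r| ≤ b(r,k)` and
`rK ⊆ (1/(k-1)) ∗ X_r + K`. In particular, `K` is an `(r, b(r,k))`-approximate group. -/
theorem polytope_approximate_group {V : Type*} [AddCommGroup V] [Module ℝ V]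
    (A : Set V) (hA : A.Finite) (k : ℕ) (hk : A.ncard = k) (hk2 : 2 ≤ k)
    (r : ℕ) (hr : 2 ≤ r) :
    (∃ X : Finset V, (↑X : Set V) ⊆ semigroupGen A ∧ X.card ≤ b r k ∧
      hsum r (convexHull ℝ A) ⊆
        (fun x => ((k : ℝ) - 1)⁻¹ • x) '' (↑X : Set V) + convexHull ℝ A) ∧
    ∃ Y : Finset V, Y.card ≤ b r k ∧
      hsum r (convexHull ℝ A) ⊆ ↑Y + convexHull ℝ A := by
  classical
  obtain ⟨T, rfl⟩ : ∃ T : Finset V, ↑T = A := ⟨hA.toFinset, hA.coe_toFinset⟩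
  obtain ⟨n, rfl⟩ : ∃ n, k = n + 1 := ⟨k - 1, by omega⟩
  obtain ⟨s, rfl⟩ : ∃ s, r = s + 1 := ⟨r - 1, by omega⟩
  rw [Set.ncard_coe_finset] at hk
  have hcover : hsum (s + 1) (convexHull ℝ (T : Set V)) ⊆
      (fun x => (((n + 1 : ℕ) : ℝ) - 1)⁻¹ • x) '' ↑(hsumFinset (n * s) T) +
        convexHull ℝ (T : Set V) := by
    intro z hz
    obtain ⟨w, hw, rfl⟩ := hsum_subset_smul (convex_convexHull ℝ _) s.succ_pos hz
    obtain ⟨x, hx, y, hy, hwxy⟩ :=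
      exists_smul_mem_hsumFinset_add_mem_convexHull (by omega) hk.le s hw
    exact ⟨_, ⟨x, hx, rfl⟩, y, hy, by push_cast at hwxy ⊢; simpa using hwxy.symm⟩
  have hcard : (hsumFinset (n * s) T).card ≤ b (s + 1) (n + 1) :=
    (card_hsumFinset_le _ _).trans (hk ▸ choose_le_b n s)
  have hgen : ↑(hsumFinset (n * s) T) ⊆ semigroupGen (T : Set V) :=
    (coe_hsumFinset_subset _ _).trans (hsum_subset_semigroupGen (Nat.mul_pos (by omega) (by omega)))
  exact ⟨⟨_, hgen, hcard, hcover⟩, _, Finset.card_image_le.trans hcard, by rwa [Finset.coe_image]⟩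
end

section
/- Let a_0 < a_1 be real numbers, let K = [a_0, a_1] be the closed interval, and let r ≥ 2 be an integer. If X is any finite subset of ℝ such that the r-fold sumset rK is contained in X + K, then |X| ≥ r. Consequently, the bound b(r,2) = r in the polytope approximate-group theorem is tight for k = 2. -/
open Pointwise

/-- Tightness of the bound `b(r,2) = r`: if `K = [a₀, a₁]` with `a₀ < a₁` and `X` is a
finite subset of `ℝ` with `rK ⊆ X + K`, then `|X| ≥ r`. -/
theorem interval_cover_lower_bound (a₀ a₁ : ℝ) (ha : a₀ < a₁) (r : ℕ) (hr : 2 ≤ r)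
    (X : Finset ℝ) (hX : hsum r (Set.Icc a₀ a₁) ⊆ ↑X + Set.Icc a₀ a₁) :
    r ≤ X.card := by
  have hrpos : (0:ℝ) < r := by positivity
  -- the interval [r·a₀, r·a₁] is contained in the r-fold sumset
  have hsub : Set.Icc ((r:ℝ) * a₀) ((r:ℝ) * a₁) ⊆ hsum r (Set.Icc a₀ a₁) := by
    intro z hz
    refine ⟨fun _ => z / r, fun i => ?_, ?_⟩
    · constructor
      · rw [le_div_iff₀ hrpos]; linarith [hz.1]
      · rw [div_le_iff₀ hrpos]; linarith [hz.2]
    · simp [Finset.sum_const, mul_comm]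
      field_simp
  have hsub2 : Set.Icc ((r:ℝ) * a₀) ((r:ℝ) * a₁) ⊆ ⋃ x ∈ X, Set.Icc (x + a₀) (x + a₁) := by
    intro z hz
    obtain ⟨x, hx, k, hk, rfl⟩ := hX (hsub hz)
    simp only [Set.mem_Icc] at hz hk
    refine Set.mem_biUnion hx ?_
    show x + k ∈ Set.Icc (x + a₀) (x + a₁)
    exact ⟨by linarith [hk.1], by linarith [hk.2]⟩
  have hm := (MeasureTheory.measure_mono hsub2).trans
    (MeasureTheory.measure_biUnion_finset_le (μ := MeasureTheory.volume) X _)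
  simp only [Real.volume_Icc] at hm
  have hm2 : ENNReal.ofReal ((r:ℝ) * a₁ - (r:ℝ) * a₀) ≤
      (X.card : ENNReal) * ENNReal.ofReal (a₁ - a₀) := by
    simpa [Finset.sum_const, nsmul_eq_mul, add_sub_add_left_eq_sub] using hm
  rw [← ENNReal.ofReal_natCast X.card, ← ENNReal.ofReal_mul (by positivity)] at hm2
  have hreal : (r:ℝ) * a₁ - (r:ℝ) * a₀ ≤ (X.card : ℝ) * (a₁ - a₀) :=
    (ENNReal.ofReal_le_ofReal_iff (mul_nonneg (by positivity) (by linarith))).mp hm2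
  have : (r:ℝ) ≤ (X.card : ℝ) := by
    have h0 : (0:ℝ) < a₁ - a₀ := by linarith
    nlinarith
  exact_mod_cast this
end

section
/- Let A be a finite subset of a real vector space V with |A| = k ≥ 2, and let K = conv(A) be the convex hull of A. If c is a positive integer and h is an integer with h ≥ ck, then hK ⊆ c∗A + (h-c)K, where c∗A = {ca : a ∈ A} is the dilation of A by c. -/
open Pointwise

lemma smul_mem_hsum {V : Type*} [AddCommMonoid V] {K : Set V} {y : V} (hy : y ∈ K) (n : ℕ) :
    n • y ∈ hsum n K :=
  ⟨fun _ => y, fun _ => hy, by simp⟩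

/-- If `A` is a finite subset of a real vector space with `|A| = k ≥ 2`, `K = conv(A)`,
`c` is a positive integer and `h ≥ ck`, then `hK ⊆ c ∗ A + (h-c)K`. -/
theorem sumset_absorb_dilate {V : Type*} [AddCommGroup V] [Module ℝ V]
    (A : Set V) (hA : A.Finite) (k : ℕ) (hk : A.ncard = k) (hk2 : 2 ≤ k)
    (c h : ℕ) (hc : 0 < c) (hh : c * k ≤ h) :
    hsum h (convexHull ℝ A) ⊆
      (fun x => (c : ℝ) • x) '' A + hsum (h - c) (convexHull ℝ A) := by
  classical
  rintro z ⟨f, hf, rfl⟩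
  set K := convexHull ℝ A with hK
  have hch : c < h := lt_of_lt_of_le (by nlinarith) hh
  have hpos : (0:ℝ) < h := by exact_mod_cast hc.trans hch
  have hhc : (0:ℝ) < (h:ℝ) - c := by
    have : (c:ℝ) < h := by exact_mod_cast hch
    linarith
  -- x is the average of the f i, lies in K
  set x : V := (h:ℝ)⁻¹ • ∑ i, f i with hx
  have hxK : x ∈ K := by
    have := (convex_convexHull ℝ A).sum_mem (t := (Finset.univ : Finset (Fin h)))
      (w := fun _ => (h:ℝ)⁻¹) (fun i _ => by positivity)
      (by rw [Finset.sum_const, Finset.card_univ, Fintype.card_fin, nsmul_eq_mul,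
        mul_inv_cancel₀ hpos.ne'])
      (fun i _ => hf i)
    simpa [hx, Finset.smul_sum] using this
  have hhx : (h:ℝ) • x = ∑ i, f i := by
    rw [hx, smul_smul, mul_inv_cancel₀ (ne_of_gt hpos), one_smul]
  -- express x as convex combination over the finset s
  set s := hA.toFinset with hs
  have hcard : s.card = k := by rw [hs, ← Set.ncard_eq_toFinset_card A hA, hk]
  have hxs : x ∈ convexHull ℝ (s : Set V) := by rwa [hs, hA.coe_toFinset]
  rw [Finset.convexHull_eq] at hxs
  obtain ⟨w, hw0, hw1, hwx⟩ := hxs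
  rw [Finset.centerMass_eq_of_sum_1 _ _ hw1] at hwx
  simp only [id_eq] at hwx
  -- pigeonhole: some a with w a ≥ 1/k
  have hk0 : (0:ℝ) < k := by positivity
  have hsne : s.Nonempty := by
    rw [← Finset.card_pos, hcard]; omega
  obtain ⟨a, has, hwa⟩ : ∃ a ∈ s, (k:ℝ)⁻¹ ≤ w a := by
    apply Finset.exists_le_of_sum_le hsne
    rw [hw1, Finset.sum_const, hcard, nsmul_eq_mul, mul_inv_cancel₀ hk0.ne']
  have hca : (c:ℝ) ≤ (h:ℝ) * w a := by
    have h1 : (c:ℝ) * k ≤ h := by exact_mod_cast hh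
    have h3 : (h:ℝ) * (k:ℝ)⁻¹ ≤ h * w a := mul_le_mul_of_nonneg_left hwa hpos.le
    have h4 : (c:ℝ) ≤ (h:ℝ) / k := (le_div_iff₀ hk0).2 h1
    rw [div_eq_mul_inv] at h4
    linarith
  have haA : a ∈ A := by rwa [hs, hA.mem_toFinset] at has
  -- new weights
  set w' : V → ℝ := fun b => ((h:ℝ) * w b - if b = a then (c:ℝ) else 0) / ((h:ℝ) - c)
    with hw'
  have hw'0 : ∀ b ∈ s, 0 ≤ w' b := by
    intro b hb
    simp only [hw']
    apply div_nonneg _ hhc.le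
    by_cases hba : b = a
    · subst hba; rw [if_pos rfl]; linarith
    · rw [if_neg hba, sub_zero]
      exact mul_nonneg hpos.le (hw0 b hb)
  have hwsum : ∑ b ∈ s, w' b = 1 := by
    simp only [hw']
    rw [← Finset.sum_div, Finset.sum_sub_distrib, ← Finset.mul_sum, hw1,
      Finset.sum_ite_eq' s a (fun _ => (c:ℝ)), if_pos has]
    field_simp
  set y : V := ∑ b ∈ s, w' b • b with hy
  have hyK : y ∈ K := by
    apply (convex_convexHull ℝ A).sum_mem hw'0 hwsum
    intro b hb
    exact subset_convexHull ℝ A (by rwa [hs, hA.mem_toFinset] at hb)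
  -- key identity
  have hkey : ((h:ℝ) - c) • y = (h:ℝ) • x - (c:ℝ) • a := by
    rw [hy, Finset.smul_sum]
    have hterm : ∀ b ∈ s, ((h:ℝ) - c) • (w' b • b)
        = ((h:ℝ) * w b) • b - (if b = a then (c:ℝ) • a else 0) := by
      intro b hb
      have hmul : ((h:ℝ) - c) * w' b = (h:ℝ) * w b - (if b = a then (c:ℝ) else 0) := by
        simp only [hw']; field_simp
      rw [smul_smul, hmul, sub_smul]
      by_cases hba : b = a <;> simp [hba]
    rw [Finset.sum_congr rfl hterm, Finset.sum_sub_distrib,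
      Finset.sum_ite_eq' s a (fun _ => (c:ℝ) • a), if_pos has, ← hwx, Finset.smul_sum]
    congr 1
    apply Finset.sum_congr rfl
    intro b hb
    rw [smul_smul]
  refine ⟨(c:ℝ) • a, ⟨a, haA, rfl⟩, (h - c) • y, smul_mem_hsum hyK _, ?_⟩
  have hcast : ((h - c : ℕ) : ℝ) = (h:ℝ) - c := by
    rw [Nat.cast_sub hch.le]
  rw [← Nat.cast_smul_eq_nsmul ℝ, hcast, hkey, hhx]
  module
end

section
/- Let A = {0, a_1, …, a_{k-1}} be a finite subset of a real normed vector space V with |A| = k ≥ 2 and 0 ∈ A, such that the additive subgroup G(A) generated by A is a discrete subgroup of V (every bounded subset of V contains only finitely many elements of G(A)). Let K = conv(A). Then there exists a positive integer c = c(A) such that for every integer h ≥ ck, G(A) ∩ (c·(a_1 + ⋯ + a_{k-1}) + (h-ck)K) ⊆ hA, where hA denotes the h-fold sumset of A. -/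
/-!
Write a point `x` of `G(A) ∩ (c·Σa + H·K)` as `Σ_{a ≠ 0} (c + μ_a) a` with `μ_a ≥ 0` and
`Σ μ_a ≤ H`. Rounding the coefficients down leaves the remainder `Σ fract(c + μ_a) a`, which
lies in `G(A)` and has norm at most `Σ ‖a‖`; by discreteness there are only finitely many such
remainders, so they admit integer representations with `Σ |n_a| ≤ C` for a single `C`. With
`c = C + 1` the combined coefficients `⌊c + μ_a⌋ + n_a` are nonnegative and sum to at most
`(k - 1)c + H + C < ck + H = h`, and the missing summands are filled with `0 ∈ A`.
-/

open Pointwise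

open Finset

section Sumset

variable {V : Type*} [AddCommMonoid V] {A : Set V}

lemma zero_mem_hsum (h0 : (0 : V) ∈ A) (n : ℕ) : (0 : V) ∈ hsum n A :=
  ⟨fun _ => 0, fun _ => h0, by simp⟩

lemma add_mem_hsum {x y : V} {m n : ℕ} (hx : x ∈ hsum m A) (hy : y ∈ hsum n A) :
    x + y ∈ hsum (m + n) A := by
  obtain ⟨f, hf, rfl⟩ := hx
  obtain ⟨g, hg, rfl⟩ := hy
  refine ⟨Fin.append f g, fun i => ?_, by simp [Fin.sum_univ_add]⟩
  induction i using Fin.addCases with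
  | left i => simpa using hf i
  | right i => simpa using hg i

lemma nsmul_mem_hsum {a : V} (ha : a ∈ A) (n : ℕ) : n • a ∈ hsum n A :=
  ⟨fun _ => a, fun _ => ha, by simp⟩

lemma hsum_mono (h0 : (0 : V) ∈ A) {m n : ℕ} (hmn : m ≤ n) : hsum m A ⊆ hsum n A := by
  intro x hx
  simpa [Nat.add_sub_cancel' hmn] using add_mem_hsum hx (zero_mem_hsum h0 (n - m))

lemma sum_nsmul_mem_hsum (h0 : (0 : V) ∈ A) (s : Finset V) (hsA : (s : Set V) ⊆ A)
    (N : V → ℕ) {h : ℕ} (hN : ∑ a ∈ s, N a ≤ h) : ∑ a ∈ s, N a • a ∈ hsum h A := by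
  refine hsum_mono h0 hN ?_
  clear hN
  induction s using Finset.cons_induction with
  | empty => exact zero_mem_hsum h0 0
  | cons a s has ih =>
    rw [coe_cons, Set.insert_subset_iff] at hsA
    rw [sum_cons, sum_cons]
    exact add_mem_hsum (nsmul_mem_hsum hsA.1 _) (ih hsA.2)

end Sumset

lemma sum_zsmul_mem_hsum {V : Type*} [AddCommGroup V] {A : Set V} (h0 : (0 : V) ∈ A)
    (s : Finset V) (hsA : (s : Set V) ⊆ A) (N : V → ℤ) (hN0 : ∀ a ∈ s, 0 ≤ N a) {h : ℕ}
    (hN : ∑ a ∈ s, N a ≤ h) : ∑ a ∈ s, N a • a ∈ hsum h A := by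
  have hcast : ∀ a ∈ s, ((N a).toNat : ℤ) = N a := fun a ha => Int.toNat_of_nonneg (hN0 a ha)
  have hsum_eq : ∑ a ∈ s, N a • a = ∑ a ∈ s, (N a).toNat • a :=
    sum_congr rfl fun a ha => by rw [← natCast_zsmul, hcast a ha]
  rw [hsum_eq]
  refine sum_nsmul_mem_hsum h0 s hsA _ ?_
  zify
  rwa [sum_congr rfl hcast]

lemma AddSubgroup.closure_diff_zero {V : Type*} [AddGroup V] (S : Set V) :
    closure (S \ {0}) = closure S := by
  rw [← closure_insert_zero, Set.insert_sdiff_singleton, closure_insert_zero]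

lemma exists_sum_abs_le_of_finite_subset_closure {V : Type*} [AddCommGroup V] (s : Finset V)
    {R : Set V} (hR : R.Finite) (hRs : R ⊆ AddSubgroup.closure (s : Set V)) :
    ∃ C : ℕ, ∀ r ∈ R, ∃ n : V → ℤ, ∑ a ∈ s, n a • a = r ∧ ∑ a ∈ s, |n a| ≤ C := by
  classical
  have hrep : ∀ r ∈ R, ∃ n : V → ℤ, ∑ a ∈ s, n a • a = r := by
    intro r hr
    have hr' : r ∈ Submodule.span ℤ (s : Set V) := by
      rw [← Submodule.mem_toAddSubgroup, Submodule.span_int_eq_addSubgroupClosure]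
      exact hRs hr
    obtain ⟨n, -, hn⟩ := Submodule.mem_span_finset.1 hr'
    exact ⟨n, hn⟩
  choose! n hn using hrep
  refine ⟨hR.toFinset.sup fun r => (∑ a ∈ s, |n r a|).toNat,
    fun r hr => ⟨n r, hn r hr, ?_⟩⟩
  calc ∑ a ∈ s, |n r a| ≤ (∑ a ∈ s, |n r a|).toNat := Int.self_le_toNat _
    _ ≤ _ := Nat.cast_le.2 <|
      le_sup (f := fun r => (∑ a ∈ s, |n r a|).toNat) (hR.mem_toFinset.2 hr)

lemma exists_sum_smul_of_mem_smul_convexHull {V : Type*} [AddCommGroup V] [Module ℝ V]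
    [DecidableEq V] (F : Finset V) {t : ℝ} (ht : 0 ≤ t) {y : V}
    (hy : y ∈ (fun x => t • x) '' convexHull ℝ (F : Set V)) :
    ∃ μ : V → ℝ, (∀ a ∈ F.erase 0, 0 ≤ μ a) ∧ ∑ a ∈ F.erase 0, μ a ≤ t ∧
      y = ∑ a ∈ F.erase 0, μ a • a := by
  obtain ⟨z, hz, rfl⟩ := hy
  rw [Finset.convexHull_eq] at hz
  obtain ⟨w, hw0, hw1, rfl⟩ := hz
  refine ⟨fun a => t * w a, fun a ha => mul_nonneg ht (hw0 a (mem_of_mem_erase ha)), ?_, ?_⟩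
  · rw [← mul_sum]
    refine mul_le_of_le_one_right ht (hw1 ▸ ?_)
    exact sum_le_sum_of_subset_of_nonneg (erase_subset _ _) fun a ha _ => hw0 a ha
  · dsimp only
    rw [centerMass_eq_of_sum_1 _ _ hw1, sum_erase _ (by simp)]
    simp [smul_sum, smul_smul]

lemma norm_sum_fract_smul_le {ι V : Type*} [NormedAddCommGroup V] [NormedSpace ℝ V]
    (s : Finset ι) (μ : ι → ℝ) (v : ι → V) :
    ‖∑ i ∈ s, Int.fract (μ i) • v i‖ ≤ ∑ i ∈ s, ‖v i‖ := by
  refine (norm_sum_le _ _).trans (sum_le_sum fun i _ => ?_)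
  rw [norm_smul, Real.norm_of_nonneg (Int.fract_nonneg _)]
  exact mul_le_of_le_one_left (norm_nonneg _) (Int.fract_lt_one _).le

lemma exists_nonneg_int_combination {V : Type*} [NormedAddCommGroup V] [NormedSpace ℝ V]
    (G : AddSubgroup V) (s : Finset V) (hsG : (s : Set V) ⊆ G) {C : ℕ}
    (hC : ∀ r ∈ Metric.closedBall 0 (∑ a ∈ s, ‖a‖) ∩ (G : Set V),
      ∃ n : V → ℤ, ∑ a ∈ s, n a • a = r ∧ ∑ a ∈ s, |n a| ≤ C)
    {x : V} (hxG : x ∈ G) (μ : V → ℝ) (hμC : ∀ a ∈ s, (C : ℝ) ≤ μ a)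
    (hx : x = ∑ a ∈ s, μ a • a) :
    ∃ N : V → ℤ, (∀ a ∈ s, 0 ≤ N a) ∧ (∑ a ∈ s, N a : ℝ) ≤ ∑ a ∈ s, μ a + C ∧
      x = ∑ a ∈ s, N a • a := by
  set r := ∑ a ∈ s, Int.fract (μ a) • a
  have hx_floor : x = ∑ a ∈ s, ⌊μ a⌋ • a + r := by
    rw [hx, ← sum_add_distrib]
    refine sum_congr rfl fun a _ => ?_
    rw [← Int.cast_smul_eq_zsmul ℝ, ← add_smul, Int.floor_add_fract]
  have hrG : r ∈ G := by
    rw [eq_sub_of_add_eq' hx_floor.symm]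
    exact sub_mem hxG (sum_mem fun a ha => zsmul_mem (hsG ha) _)
  have hr_norm : r ∈ Metric.closedBall 0 (∑ a ∈ s, ‖a‖) :=
    mem_closedBall_zero_iff.2 (norm_sum_fract_smul_le s μ id)
  obtain ⟨n, hn, hnC⟩ := hC r ⟨hr_norm, hrG⟩
  refine ⟨fun a => ⌊μ a⌋ + n a, fun a ha => ?_, ?_, ?_⟩
  · have hna : |n a| ≤ ∑ b ∈ s, |n b| :=
      single_le_sum (f := fun b => |n b|) (fun _ _ => abs_nonneg _) ha
    have hfloor : (C : ℤ) ≤ ⌊μ a⌋ := Int.le_floor.2 (by exact_mod_cast hμC a ha)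
    have := neg_abs_le (n a)
    show 0 ≤ ⌊μ a⌋ + n a
    omega
  · have hn_sum : (∑ a ∈ s, n a : ℝ) ≤ C := by
      exact_mod_cast (sum_le_sum fun a _ => le_abs_self (n a)).trans hnC
    push_cast
    rw [sum_add_distrib]
    exact add_le_add (sum_le_sum fun a _ => Int.floor_le _) hn_sum
  · rw [hx_floor, ← hn, ← sum_add_distrib]
    simp only [add_smul]

theorem khovanskii_lemma_general {V : Type*} [NormedAddCommGroup V] [NormedSpace ℝ V]
    (A : Set V) (hA : A.Finite) (k : ℕ) (hk : A.ncard = k)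
    (h0A : (0 : V) ∈ A)
    (hdisc : ∀ B : Set V, Bornology.IsBounded B →
      (B ∩ (AddSubgroup.closure A : Set V)).Finite) :
    ∃ c : ℕ, 0 < c ∧ ∀ h : ℕ, c * k ≤ h →
      (AddSubgroup.closure A : Set V) ∩
        ({(c : ℝ) • ∑ a ∈ hA.toFinset, a} +
          (fun x => ((h - c * k : ℕ) : ℝ) • x) '' convexHull ℝ A)
        ⊆ hsum h A := by
  classical
  have hFA : (hA.toFinset : Set V) = A := hA.coe_toFinset
  set s := hA.toFinset.erase 0
  have hsA : (s : Set V) ⊆ A := by simp [s]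
  have hs_card : (s.card : ℝ) + 1 = k := by
    rw [← hk, Set.ncard_eq_toFinset_card _ hA, ← card_erase_add_one (hA.mem_toFinset.2 h0A)]
    push_cast; rfl
  obtain ⟨C, hC⟩ := exists_sum_abs_le_of_finite_subset_closure s
    (hdisc (Metric.closedBall 0 (∑ a ∈ s, ‖a‖)) Metric.isBounded_closedBall)
    (by rw [coe_erase, hFA, AddSubgroup.closure_diff_zero]; exact Set.inter_subset_right)
  refine ⟨C + 1, C.succ_pos, fun h hh x ⟨hxG, hx⟩ => ?_⟩
  obtain ⟨_, rfl, y, hy, rfl⟩ := hx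
  rw [← hFA] at hy
  obtain ⟨μ, hμ0, hμ_sum, rfl⟩ := exists_sum_smul_of_mem_smul_convexHull _ (Nat.cast_nonneg _) hy
  have hx_comb : ((C + 1 : ℕ) : ℝ) • ∑ a ∈ hA.toFinset, a + ∑ a ∈ s, μ a • a =
      ∑ a ∈ s, ((C + 1 : ℕ) + μ a) • a := by
    rw [← sum_erase hA.toFinset (rfl : (0 : V) = 0), smul_sum, ← sum_add_distrib]
    simp only [s, add_smul]
  obtain ⟨N, hN0, hN_sum, hxN⟩ := exists_nonneg_int_combination _ s
    (hsA.trans AddSubgroup.subset_closure) hC hxG _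
    (fun a ha => by push_cast; linarith [hμ0 a ha]) hx_comb
  rw [hxN]
  refine sum_zsmul_mem_hsum h0A s hsA N hN0 ?_
  change ∑ a ∈ s, μ a ≤ _ at hμ_sum
  rw [sum_add_distrib, sum_const, nsmul_eq_mul] at hN_sum
  rw [Nat.cast_sub hh] at hμ_sum
  push_cast at hN_sum hμ_sum
  have : (∑ a ∈ s, N a : ℝ) ≤ h := calc
    (∑ a ∈ s, N a : ℝ) ≤ s.card * (C + 1) + (h - (C + 1) * k) + C := by linarith
    _ = h - 1 := by rw [← hs_card]; ring
    _ ≤ h := by linarith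
  exact_mod_cast this

/-- Khovanskii-type lemma: let `A = {0, a₁, …, a_{k-1}}` be a finite subset of a real
normed vector space with `|A| = k ≥ 2` and `0 ∈ A`, whose generated additive subgroup
`G(A)` is discrete (every bounded set contains only finitely many of its elements), and
let `K = conv(A)`.  Then there is a positive integer `c` such that for all `h ≥ ck`,
`G(A) ∩ (c(a₁ + ⋯ + a_{k-1}) + (h-ck)K) ⊆ hA`.  (Since `0 ∈ A`, the sum
`a₁ + ⋯ + a_{k-1}` is the sum of all elements of `A`.) -/
theorem khovanskii_lemma {V : Type*} [NormedAddCommGroup V] [NormedSpace ℝ V]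
    (A : Set V) (hA : A.Finite) (k : ℕ) (hk : A.ncard = k) (hk2 : 2 ≤ k)
    (h0A : (0 : V) ∈ A)
    (hdisc : ∀ B : Set V, Bornology.IsBounded B →
      (B ∩ (AddSubgroup.closure A : Set V)).Finite) :
    ∃ c : ℕ, 0 < c ∧ ∀ h : ℕ, c * k ≤ h →
      (AddSubgroup.closure A : Set V) ∩
        ({(c : ℝ) • ∑ a ∈ hA.toFinset, a} +
          (fun x => ((h - c * k : ℕ) : ℝ) • x) '' convexHull ℝ A)
        ⊆ hsum h A :=
  khovanskii_lemma_general A hA k hk h0A hdisc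
end

section
/- Let A = {a_0, a_1, …, a_{k-1}} be a finite subset of a real normed vector space V with |A| = k ≥ 2, such that the additive subgroup G(A) generated by A is a discrete subgroup of V. Let A' = (k-1)∗A be the dilation of A by k-1. Then there exists a positive integer c = c(A) such that for all integers r ≥ 2 and h ≥ ck^2 there is a set X'_{r,h} ⊆ G(A) with |X'_{r,h}| ≤ k·b(r,k) and rhA' ⊆ X'_{r,h} + hA'. In particular, (k-1)∗A is an asymptotic (r, k·b(r,k))-approximate group for every r ≥ 2. -/
/-!
Write an element of `rhA'` as `∑ yᵢ • vᵢ` with `vᵢ = (k-1) • aᵢ`, `yᵢ ∈ ℕ` and `∑ yᵢ = rh`, and put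
`d = ⌊h/(k-1)⌋`. Let `j` be a coordinate where `y` is largest and split every other coordinate as
`yᵢ = d⌊yᵢ/d⌋ + (yᵢ mod d)`. Since `yⱼ ≥ rh/k`, once `h ≥ (k-1)²` the quotients satisfy
`∑_{i≠j} ⌊yᵢ/d⌋ ≤ r(k-1) - 1`, so the vectors `(d⌊yᵢ/d⌋)_{i≠j}`, completed at `j` so as to have
sum `(r-1)h`, range over at most `k · b(r,k)` vectors of `ℤᵏ`. What is left of `y` has nonnegative
coordinates, because the remainders add up to at most `(k-1)d ≤ h`, and sum `h`: it is an element
of `hA'`.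
-/

open Pointwise

open Finset

section Sumset

variable {M : Type*} {k m : ℕ}

theorem sum_nsmul_mem_hsum_s16 [AddCommMonoid M] (v : Fin k → M) {y : Fin k → ℕ}
    (hy : ∑ i, y i = m) : ∑ i, y i • v i ∈ hsum m (Set.range v) := by
  have hcard : Fintype.card ((i : Fin k) × Fin (y i)) = m := by simp [hy]
  let e := Fintype.equivFinOfCardEq hcard
  refine ⟨fun j => v (e.symm j).1, fun j => ⟨_, rfl⟩, ?_⟩
  rw [Equiv.sum_comp e.symm (fun p => v p.1), ← univ_sigma_univ, sum_sigma]
  simp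

theorem exists_sum_nsmul_eq_of_mem_hsum [AddCommMonoid M] (v : Fin k → M) {x : M}
    (hx : x ∈ hsum m (Set.range v)) : ∃ y : Fin k → ℕ, ∑ i, y i = m ∧ x = ∑ i, y i • v i := by
  classical
  obtain ⟨f, hf, rfl⟩ := hx
  choose g hg using hf
  refine ⟨fun i => #{j | g j = i}, ?_, ?_⟩
  · simpa using (card_eq_sum_card_fiberwise (s := univ) (t := univ) fun j _ => mem_univ (g j)).symm
  · rw [← sum_fiberwise univ g f]
    refine sum_congr rfl fun i _ => ?_
    rw [sum_congr rfl fun j hj => (hg j).symm.trans (congrArg v (mem_filter.1 hj).2), sum_const]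

theorem hsum_subset_image_add_hsum [AddCommGroup M] [DecidableEq M] (v : Fin k → M)
    (T : Finset (Fin k → ℤ)) {n : ℕ} (hT : ∀ y : Fin k → ℕ, ∑ i, y i = m →
      ∃ t ∈ T, (∀ i, t i ≤ y i) ∧ ∑ i, t i = (m : ℤ) - n) :
    hsum m (Set.range v) ⊆ ↑(T.image fun t => ∑ i, t i • v i) + hsum n (Set.range v) := by
  intro x hx
  obtain ⟨y, hy, rfl⟩ := exists_sum_nsmul_eq_of_mem_hsum v hx
  obtain ⟨t, ht, hty, ht_sum⟩ := hT y hy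
  set z : Fin k → ℕ := fun i => (y i - t i).toNat
  have hz : ∀ i, (z i : ℤ) = y i - t i := fun i => Int.toNat_of_nonneg (sub_nonneg.2 (hty i))
  have hz_sum : ∑ i, z i = n := by
    have : ((∑ i, z i : ℕ) : ℤ) = n := by
      rw [Nat.cast_sum]
      simp only [hz, sum_sub_distrib, ht_sum, ← hy, Nat.cast_sum]
      ring
    exact_mod_cast this
  refine ⟨_, mem_image_of_mem _ ht, _, sum_nsmul_mem_hsum_s16 v hz_sum, ?_⟩
  simp only [← sum_add_distrib]
  refine sum_congr rfl fun i _ => ?_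
  rw [← natCast_zsmul, ← natCast_zsmul, ← add_smul, hz, add_sub_cancel]

end Sumset

theorem multichoose_eq_b {r k : ℕ} (hr : 1 ≤ r) (hk : 2 ≤ k) :
    Nat.multichoose k (r * (k - 1) - 1) = b r k := by
  have hN : 1 ≤ r * (k - 1) := Nat.mul_pos (by omega) (by omega)
  have htop : (r + 1) * (k - 1) - 1 = (k - 1) + (r * (k - 1) - 1) := by
    rw [add_one_mul]
    omega
  rw [Nat.multichoose_eq, b, htop, Nat.choose_symm_add,
    show k + (r * (k - 1) - 1) - 1 = (k - 1) + (r * (k - 1) - 1) by omega]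

theorem Finset.sum_le_mul_sum_div_add {ι : Type*} (s : Finset ι) (y : ι → ℕ) {d : ℕ}
    (hd : 0 < d) : ∑ i ∈ s, y i ≤ d * ∑ i ∈ s, y i / d + #s * d := by
  rw [mul_sum, ← smul_eq_mul, ← sum_const, ← sum_add_distrib]
  exact sum_le_sum fun i _ => (Nat.lt_div_mul_add hd).le.trans_eq (by ring)

-- The vectors `d • w + c • eⱼ`: the coordinate `wⱼ` only serves as slack for
-- `∑_{i ≠ j} wᵢ ≤ N`, and `c` makes the coordinate sum of every translate equal to `(r-1)h`.
def translates (k r h : ℕ) : Finset (Fin k → ℤ) :=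
  let d := h / (k - 1)
  let N := r * (k - 1) - 1
  let c : ℤ := ((r : ℤ) - 1) * h - (d * N : ℕ)
  (univ ×ˢ piAntidiag univ N).image fun p => (fun i => ((d * p.2 i : ℕ) : ℤ)) + Pi.single p.1 c

section Translates

variable {k r h : ℕ}

theorem card_translates_le (hr : 1 ≤ r) (hk : 2 ≤ k) : #(translates k r h) ≤ k * b r k := by
  have hcard : #(piAntidiag (univ : Finset (Fin k)) (r * (k - 1) - 1)) = b r k := by
    rw [← map_sym_eq_piAntidiag, card_map, sym_univ, card_univ, Sym.card_sym_eq_multichoose,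
      Fintype.card_fin, multichoose_eq_b hr hk]
  calc #(translates k r h) ≤ #(univ ×ˢ piAntidiag univ (r * (k - 1) - 1)) := card_image_le
    _ = k * b r k := by rw [card_product, card_univ, Fintype.card_fin, hcard]

theorem sum_of_mem_translates {t : Fin k → ℤ} (ht : t ∈ translates k r h) :
    ∑ i, t i = ((r * h : ℕ) : ℤ) - h := by
  obtain ⟨⟨j, w⟩, hw, rfl⟩ := mem_image.1 ht
  have hw : ∑ i, w i = r * (k - 1) - 1 := (mem_piAntidiag.1 (mem_product.1 hw).2).1
  simp only [Pi.add_apply, sum_add_distrib, Finset.sum_pi_single', mem_univ, if_true]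
  rw [← Nat.cast_sum, ← mul_sum, hw]
  push_cast
  ring

theorem sum_erase_div_lt (hk : 2 ≤ k) (hr : 1 ≤ r) (hh : (k - 1) ^ 2 ≤ h) {y : Fin k → ℕ}
    (hy : ∑ i, y i = r * h) {j : Fin k} (hj : ∀ i, y i ≤ y j) :
    ∑ i ∈ univ.erase j, y i / (h / (k - 1)) < r * (k - 1) := by
  obtain ⟨K, rfl⟩ : ∃ K, k = K + 1 := ⟨k - 1, by omega⟩
  simp only [add_tsub_cancel_right] at hh ⊢
  set d := h / K
  set S := ∑ i ∈ univ.erase j, y i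
  have hS : y j + S = r * h := by rw [add_sum_erase _ _ (mem_univ j), hy]
  have hdF : d * ∑ i ∈ univ.erase j, y i / d ≤ S := by
    rw [mul_sum]
    exact sum_le_sum fun i _ => Nat.mul_div_le (y i) d
  have hY : r * h ≤ (K + 1) * y j := by
    rw [← hy]
    simpa using sum_le_card_nsmul univ y (y j) fun i _ => hj i
  have hKd : h < K * (d + 1) := Nat.lt_mul_div_succ h (by omega)
  -- Otherwise `kd ≤ h`, which forces `d < k - 1` and then `h < (k - 1)²`.
  by_contra! hF
  have h1 : (K + 1) * S ≤ K * (r * h) := by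
    have : (K + 1) * (y j + S) = (K + 1) * (r * h) := by rw [hS]
    nlinarith
  have h2 : (r * K) * ((K + 1) * d) ≤ (r * K) * h := by
    nlinarith [Nat.mul_le_mul_left d hF]
  have h3 : (K + 1) * d ≤ h := Nat.le_of_mul_le_mul_left h2 (Nat.mul_pos (by omega) (by omega))
  nlinarith

theorem exists_mem_translates_le (hk : 2 ≤ k) (hr : 1 ≤ r) (hh : (k - 1) ^ 2 ≤ h)
    {y : Fin k → ℕ} (hy : ∑ i, y i = r * h) : ∃ t ∈ translates k r h, ∀ i, t i ≤ y i := by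
  have : Nonempty (Fin k) := ⟨⟨0, by omega⟩⟩
  obtain ⟨j, -, hj⟩ := exists_max_image univ y univ_nonempty
  simp only [translates]
  set d := h / (k - 1)
  set N := r * (k - 1) - 1
  set F := ∑ i ∈ univ.erase j, y i / d
  have hFN : F ≤ N :=
    Nat.le_sub_one_of_lt (sum_erase_div_lt hk hr hh hy fun i => hj i (mem_univ i))
  have hd : 0 < d := Nat.div_pos (le_trans (Nat.le_self_pow two_ne_zero _) hh) (by omega)
  have hS : y j + ∑ i ∈ univ.erase j, y i = r * h := by rw [add_sum_erase _ _ (mem_univ j), hy]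
  have hSF : ∑ i ∈ univ.erase j, y i ≤ d * F + h := by
    refine (sum_le_mul_sum_div_add _ y hd).trans (Nat.add_le_add_left ?_ _)
    rw [card_erase_of_mem (mem_univ j), card_univ, Fintype.card_fin]
    exact Nat.mul_div_le h (k - 1)
  set w := Function.update (fun i => y i / d) j (N - F)
  have hw : w ∈ piAntidiag univ N := by
    refine mem_piAntidiag.2 ⟨?_, by simp⟩
    rw [sum_update_of_mem (mem_univ j), sdiff_singleton_eq_erase]
    omega
  have hjw : (j, w) ∈ univ ×ˢ piAntidiag univ N := mem_product.2 ⟨mem_univ j, hw⟩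
  refine ⟨_, mem_image_of_mem _ hjw, fun i => ?_⟩
  obtain rfl | hij := eq_or_ne j i
  · simp only [w, Pi.add_apply, Function.update_self, Pi.single_eq_same]
    have hS' : (y j : ℤ) + ∑ i ∈ univ.erase j, (y i : ℤ) = r * h := by exact_mod_cast hS
    have hSF' : ∑ i ∈ univ.erase j, (y i : ℤ) ≤ d * F + h := by exact_mod_cast hSF
    push_cast [Nat.cast_sub hFN]
    linarith
  · simp only [w, Pi.add_apply, Function.update_of_ne hij.symm, Pi.single_eq_of_ne hij.symm,
      add_zero]
    exact_mod_cast Nat.mul_div_le (y i) d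

end Translates

theorem Set.Finite.exists_range_eq_of_ncard_eq {α : Type*} {s : Set α} (hs : s.Finite) {k : ℕ}
    (hk : s.ncard = k) : ∃ a : Fin k → α, Set.range a = s := by
  have := hs.to_subtype
  let e := Finite.equivFinOfCardEq (by rwa [Nat.card_coe_set_eq] : Nat.card s = k)
  exact ⟨Subtype.val ∘ e.symm, by rw [EquivLike.range_comp, Subtype.range_coe]⟩

theorem dilate_asymptotic_approximate_group_general {V : Type*} [NormedAddCommGroup V]
    [NormedSpace ℝ V] (A : Set V) (hA : A.Finite) (k : ℕ) (hk : A.ncard = k)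
    (hk2 : 2 ≤ k) :
    ∃ c : ℕ, 0 < c ∧ ∀ r h : ℕ, 2 ≤ r → c * k ^ 2 ≤ h →
      ∃ X : Finset V, (↑X : Set V) ⊆ (AddSubgroup.closure A : Set V) ∧
        X.card ≤ k * b r k ∧
        hsum (r * h) ((fun x => ((k : ℝ) - 1) • x) '' A) ⊆
          ↑X + hsum h ((fun x => ((k : ℝ) - 1) • x) '' A) := by
  classical
  refine ⟨1, one_pos, fun r h hr hh => ?_⟩
  obtain ⟨a, rfl⟩ := hA.exists_range_eq_of_ncard_eq hk
  set v : Fin k → V := fun i => ((k : ℝ) - 1) • a i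
  have hv : ∀ i, v i ∈ AddSubgroup.closure (Set.range a) := fun i => by
    rw [show v i = (k - 1) • a i by
      simp [v, ← Nat.cast_smul_eq_nsmul ℝ, Nat.cast_sub (by omega : 1 ≤ k)]]
    exact nsmul_mem (AddSubgroup.subset_closure (Set.mem_range_self i)) _
  have hh' : (k - 1) ^ 2 ≤ h := by
    have := Nat.pow_le_pow_left (Nat.sub_le k 1) 2
    omega
  have himg : (fun x => ((k : ℝ) - 1) • x) '' Set.range a = Set.range v :=
    (Set.range_comp _ _).symm
  rw [himg]
  refine ⟨(translates k r h).image fun t => ∑ i, t i • v i, ?_,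
    card_image_le.trans (card_translates_le (by omega) hk2),
    hsum_subset_image_add_hsum (m := r * h) (n := h) v _ fun y hy => ?_⟩
  · intro x hx
    obtain ⟨t, -, rfl⟩ := mem_image.1 hx
    exact sum_mem fun i _ => zsmul_mem (hv i) _
  · obtain ⟨t, ht, hle⟩ := exists_mem_translates_le hk2 (by omega) hh' hy
    exact ⟨t, ht, hle, sum_of_mem_translates ht⟩

/-- Let `A` be a finite subset of a real normed vector space with `|A| = k ≥ 2` whose
generated additive subgroup `G(A)` is discrete, and let `A' = (k-1) ∗ A`.  Then there is
a positive integer `c` such that for all `r ≥ 2` and `h ≥ ck²` there is a set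
`X'_{r,h} ⊆ G(A)` with `|X'_{r,h}| ≤ k·b(r,k)` and `rhA' ⊆ X'_{r,h} + hA'`.
In particular, `(k-1) ∗ A` is an asymptotic `(r, k·b(r,k))`-approximate group. -/
theorem dilate_asymptotic_approximate_group {V : Type*} [NormedAddCommGroup V]
    [NormedSpace ℝ V] (A : Set V) (hA : A.Finite) (k : ℕ) (hk : A.ncard = k)
    (hk2 : 2 ≤ k)
    (hdisc : ∀ B : Set V, Bornology.IsBounded B →
      (B ∩ (AddSubgroup.closure A : Set V)).Finite) :
    ∃ c : ℕ, 0 < c ∧ ∀ r h : ℕ, 2 ≤ r → c * k ^ 2 ≤ h →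
      ∃ X : Finset V, (↑X : Set V) ⊆ (AddSubgroup.closure A : Set V) ∧
        X.card ≤ k * b r k ∧
        hsum (r * h) ((fun x => ((k : ℝ) - 1) • x) '' A) ⊆
          ↑X + hsum h ((fun x => ((k : ℝ) - 1) • x) '' A) :=
  dilate_asymptotic_approximate_group_general A hA k hk hk2
end

section
/- Let G_0 be a finite abelian group of order n_0, let n be a positive integer, and let A' be a nonempty finite subset of the group G_0 × ℤ^n whose projection to ℤ^n has cardinality k ≥ 2. Then for every integer r ≥ 2, the set A' is an asymptotic (r, n_0·k·b(r,k))-approximate group in G_0 × ℤ^n. -/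
open Pointwise

/-!
Let `B ⊆ ℤⁿ` be the projection of `A'`, `d = k - 1` and `s = ⌊h / d⌋`. The projection of an
element of `(rh)A'` is `∑ y_b • b` with `∑ y_b = rh`. Reducing every coefficient except that of
a fixed `b₀ ∈ B` modulo `s`, and giving `b₀` what is left of `h`, yields coefficients `x_b`
summing to `h`, hence (after lifting `B` back to `A'`) an element of `hA'`. Once `h ≥ r d²`, the
difference `∑ (y_b - x_b) • b` is `c + s • w` with `c` depending only on `h` and `w ∈ (rd)B`.
So `(rh)A' ⊆ X + hA'` for `X = G₀ × (c + s • (rd)B)`, and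
`|(rd)B| ≤ multichoose k (rd) = (r + 1) b(r,k) / r ≤ k b(r,k)`.
-/

open Finset

theorem hsum_eq_nsmul {V : Type*} [AddCommMonoid V] (h : ℕ) (A : Set V) : hsum h A = h • A := by
  ext z
  simp [hsum, Set.mem_nsmul_iff_sum, eq_comm]

theorem Set.sum_nsmul_mem_sum_nsmul {ι V : Type*} [AddCommMonoid V] {A : Set V} (s : Finset ι)
    (t : ι → ℕ) {a : ι → V} (ha : ∀ i ∈ s, a i ∈ A) :
    ∑ i ∈ s, t i • a i ∈ (∑ i ∈ s, t i) • A := by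
  rw [Finset.sum_smul]
  exact Set.finsetSum_mem_finsetSum _ _ _ fun i hi => Set.nsmul_mem_nsmul (ha i hi)

theorem exists_mem_finsuppAntidiag_of_mem_nsmul {V W : Type*} [AddCommMonoid V]
    [AddCommMonoid W] [DecidableEq W] {φ : V →+ W} {A : Set V} {B : Finset W}
    (hAB : Set.MapsTo φ A B) :
    ∀ {m : ℕ} {ξ : V}, ξ ∈ m • A → ∃ y ∈ B.finsuppAntidiag m, φ ξ = ∑ b ∈ B, y b • b
  | 0, ξ, hξ => ⟨0, by simp_all⟩
  | m + 1, _, hξ => by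
    obtain ⟨η, hη, α, hα, rfl⟩ := Set.mem_add.1 ((succ_nsmul A m) ▸ hξ)
    obtain ⟨y, hy, hηy⟩ := exists_mem_finsuppAntidiag_of_mem_nsmul hAB hη
    have hαB : φ α ∈ B := hAB hα
    refine ⟨y + Finsupp.single (φ α) 1, ?_, ?_⟩
    · rw [mem_finsuppAntidiag] at hy ⊢
      refine ⟨?_, Finsupp.support_add.trans (union_subset hy.2 ?_)⟩
      · simp [sum_add_distrib, hy.1, Finsupp.single_apply, hαB]
      · exact Finsupp.support_single_subset.trans (singleton_subset_iff.2 hαB)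
    · simp [map_add, hηy, add_smul, sum_add_distrib, Finsupp.single_apply, hαB]

theorem Finset.card_nsmul_le_multichoose {W : Type*} [AddCommMonoid W] [DecidableEq W]
    (B : Finset W) (m : ℕ) : #(m • B) ≤ (#B).multichoose m := by
  have hsub : m • B ⊆ (B.finsuppAntidiag m).image fun y => ∑ b ∈ B, y b • b := by
    intro ξ hξ
    obtain ⟨y, hy, hξy⟩ := exists_mem_finsuppAntidiag_of_mem_nsmul (φ := AddMonoidHom.id W)
      (A := B) (fun _ h => h) (by rwa [← coe_nsmul, mem_coe])
    exact mem_image.2 ⟨y, hy, hξy.symm⟩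
  calc #(m • B) ≤ #((B.finsuppAntidiag m).image fun y => ∑ b ∈ B, y b • b) := card_le_card hsub
    _ ≤ #(B.finsuppAntidiag m) := card_image_le
    _ = (#B).multichoose m := card_finsuppAntidiag_nat_eq_multichoose m

theorem mul_multichoose_eq_mul_b (r : ℕ) {k : ℕ} (hk : 2 ≤ k) :
    r * k.multichoose (r * (k - 1)) = (r + 1) * b r k := by
  obtain ⟨d, rfl⟩ : ∃ d, k = d + 1 := ⟨k - 1, by omega⟩
  have hd : 0 < d := by omega
  have hn : (r + 1) * d - 1 + 1 = (r + 1) * d :=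
    Nat.sub_add_cancel (Nat.one_le_iff_ne_zero.2 (by positivity))
  have key := Nat.choose_mul_succ_eq ((r + 1) * d - 1) d
  rw [hn, show (r + 1) * d - d = r * d by rw [add_one_mul, Nat.add_sub_cancel]] at key
  rw [b, Nat.multichoose_eq, Nat.add_sub_cancel, show d + 1 + r * d - 1 = (r + 1) * d by
    rw [add_one_mul]; omega, Nat.choose_symm_of_eq_add (add_one_mul r d)]
  apply Nat.eq_of_mul_eq_mul_right hd
  calc _ = ((r + 1) * d).choose d * (r * d) := by ring
    _ = _ := by rw [← key]; ring

theorem exists_split_mod_div {ι : Type*} [DecidableEq ι] (B : Finset ι) {i₀ : ι} (hi₀ : i₀ ∈ B)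
    (y : ι → ℕ) {M N h s : ℕ} (hy : ∑ i ∈ B, y i = M) (hh : (#B - 1) * s ≤ h)
    (hM : M < s * (N + 1)) :
    ∃ x t : ι → ℕ, ∑ i ∈ B, x i = h ∧ ∑ i ∈ B, t i = N ∧
      ∀ i, (y i : ℤ) = x i + s * t i + if i = i₀ then (M : ℤ) - h - s * N else 0 := by
  have hs : 0 < s := Nat.pos_of_ne_zero (by rintro rfl; simp at hM)
  set S := ∑ i ∈ B.erase i₀, y i % s
  set T := ∑ i ∈ B.erase i₀, y i / s
  have hyM : y i₀ + (S + s * T) = M := by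
    rw [← hy, ← add_sum_erase _ _ hi₀, mul_sum, ← sum_add_distrib]
    exact congrArg _ (sum_congr rfl fun i _ => Nat.mod_add_div _ _)
  have hS : S ≤ h := calc
    S ≤ #(B.erase i₀) * s := sum_le_card_nsmul _ _ _ fun i _ => (Nat.mod_lt _ hs).le
    _ ≤ h := by rwa [card_erase_of_mem hi₀]
  have hT : T ≤ N :=
    Nat.lt_succ_iff.1 <| Nat.lt_of_mul_lt_mul_left (a := s) (show s * T < s * (N + 1) by omega)
  refine ⟨Function.update (fun i => y i % s) i₀ (h - S),
    Function.update (fun i => y i / s) i₀ (N - T), ?_, ?_, fun i => ?_⟩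
  · rw [sum_update_of_mem hi₀, ← erase_eq]; omega
  · rw [sum_update_of_mem hi₀, ← erase_eq]; omega
  · rcases eq_or_ne i i₀ with rfl | hi
    · simp only [Function.update_self, if_true]
      push_cast [hS, hT]
      have : (y i : ℤ) + (S + s * T) = M := by exact_mod_cast hyM
      linarith
    · simp only [Function.update_of_ne hi, if_neg hi, add_zero]
      exact_mod_cast (Nat.mod_add_div _ _).symm

theorem sum_nsmul_eq_of_coeff_eq {ι W : Type*} [AddCommGroup W] [DecidableEq ι] {B : Finset ι}
    {i₀ : ι} (hi₀ : i₀ ∈ B) (a : ι → W) {x y t : ι → ℕ} {s : ℕ} {c : ℤ}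
    (hyxt : ∀ i, (y i : ℤ) = x i + s * t i + if i = i₀ then c else 0) :
    ∑ i ∈ B, y i • a i = ∑ i ∈ B, x i • a i + s • ∑ i ∈ B, t i • a i + c • a i₀ := by
  simp_rw [← natCast_zsmul, hyxt, add_smul, mul_smul, ite_smul, zero_smul, sum_add_distrib,
    smul_sum, sum_ite_eq', if_pos hi₀]

theorem exists_nsmul_subset_add_nsmul {G₀ W : Type*} [AddCommGroup G₀] [Fintype G₀]
    [AddCommGroup W] [DecidableEq W] {A : Set (G₀ × W)} {B : Finset W}
    (hB : (B : Set W) = Prod.snd '' A) (hne : B.Nonempty) {M N h s : ℕ}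
    (hh : (#B - 1) * s ≤ h) (hM : M < s * (N + 1)) :
    ∃ X : Finset (G₀ × W), #X ≤ Fintype.card G₀ * #(N • B) ∧ M • A ⊆ X + h • A := by
  classical
  obtain ⟨b₀, hb₀⟩ := hne
  set c : W := ((M : ℤ) - h - s * N) • b₀
  refine ⟨univ ×ˢ (N • B).image (c + s • ·), ?_, fun ξ hξ => ?_⟩
  · rw [card_product, card_univ]
    exact Nat.mul_le_mul_left _ card_image_le
  obtain ⟨y, hy, hξy⟩ := exists_mem_finsuppAntidiag_of_mem_nsmul (φ := AddMonoidHom.snd G₀ W)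
    (fun p hp => hB ▸ Set.mem_image_of_mem _ hp) hξ
  obtain ⟨x, t, hx, ht, hyxt⟩ := exists_split_mod_div B hb₀ y (mem_finsuppAntidiag.1 hy).1 hh hM
  have hlift : ∀ b ∈ B, Function.invFunOn Prod.snd A b ∈ A ∧
      (Function.invFunOn Prod.snd A b).2 = b := fun b hb =>
    have hb' : b ∈ Prod.snd '' A := hB ▸ mem_coe.2 hb
    ⟨Function.invFunOn_mem hb', Function.invFunOn_eq hb'⟩
  set w := ∑ b ∈ B, x b • Function.invFunOn Prod.snd A b
  have hw : w ∈ h • A := hx ▸ Set.sum_nsmul_mem_sum_nsmul B x fun b hb => (hlift b hb).1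
  have hξw : (ξ - w).2 = c + s • ∑ b ∈ B, t b • b := by
    have hw2 : w.2 = ∑ b ∈ B, x b • b := by
      rw [Prod.snd_sum]
      exact sum_congr rfl fun b hb => by rw [Prod.smul_snd, (hlift b hb).2]
    rw [Prod.snd_sub, hw2, show ξ.2 = _ from hξy, sub_eq_iff_eq_add']
    exact (sum_nsmul_eq_of_coeff_eq hb₀ id hyxt).trans (by simp only [id, c]; abel)
  have hX : ξ - w ∈ univ ×ˢ (N • B).image (c + s • ·) := by
    refine mem_product.2 ⟨mem_univ _, mem_image.2 ⟨_, ?_, hξw.symm⟩⟩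
    rw [← mem_coe, coe_nsmul, ← ht]
    exact Set.sum_nsmul_mem_sum_nsmul B t fun b hb => hb
  exact Set.mem_add.2 ⟨ξ - w, hX, w, hw, sub_add_cancel ξ w⟩

theorem mul_lt_div_mul_succ {r d h : ℕ} (hr : 0 < r) (hd : 0 < d) (hh : r * d * d ≤ h) :
    r * h < h / d * (r * d + 1) := by
  have hq : r * d ≤ h / d := (Nat.le_div_iff_mul_le hd).2 hh
  have hlt : h < h / d * d + d := Nat.lt_div_mul_add hd
  nlinarith

theorem product_asymptotic_approximate_group_general {G₀ : Type*} [AddCommGroup G₀] [Fintype G₀]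
    (n₀ : ℕ) (hn₀ : Fintype.card G₀ = n₀) (n : ℕ)
    (A' : Set (G₀ × (Fin n → ℤ))) (hA' : A'.Finite)
    (k : ℕ) (hk : (Prod.snd '' A').ncard = k) (hk2 : 2 ≤ k)
    (r : ℕ) (hr : 2 ≤ r) :
    ∃ h₀ : ℕ, ∀ h : ℕ, h₀ ≤ h →
      ∃ X : Finset (G₀ × (Fin n → ℤ)), X.card ≤ n₀ * k * b r k ∧
        hsum (r * h) A' ⊆ ↑X + hsum h A' := by
  classical
  set B := hA'.toFinset.image Prod.snd
  have hB : (B : Set (Fin n → ℤ)) = Prod.snd '' A' := by simp [B]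
  have hBk : #B = k := by rw [← hk, ← hB, Set.ncard_coe_finset]
  have hmc : k.multichoose (r * (k - 1)) ≤ k * b r k := by
    have h2 : r * k.multichoose (r * (k - 1)) ≤ r * (2 * b r k) := by
      nlinarith [mul_multichoose_eq_mul_b r hk2]
    exact (Nat.le_of_mul_le_mul_left h2 (by omega)).trans (Nat.mul_le_mul_right _ hk2)
  refine ⟨r * (k - 1) * (k - 1), fun h hh => ?_⟩
  obtain ⟨X, hX, hcover⟩ := exists_nsmul_subset_add_nsmul hB (card_pos.1 (by omega))
    (M := r * h) (N := r * (k - 1)) (h := h) (by rw [hBk]; exact Nat.mul_div_le h (k - 1))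
    (mul_lt_div_mul_succ (by omega) (by omega) hh)
  refine ⟨X, ?_, by simpa only [hsum_eq_nsmul] using hcover⟩
  calc #X ≤ Fintype.card G₀ * #((r * (k - 1)) • B) := hX
    _ ≤ n₀ * k.multichoose (r * (k - 1)) := by
      rw [hn₀, ← hBk]; exact Nat.mul_le_mul_left _ (card_nsmul_le_multichoose B _)
    _ ≤ n₀ * k * b r k := by rw [mul_assoc]; exact Nat.mul_le_mul_left _ hmc

/-- Let `G₀` be a finite abelian group of order `n₀` and let `A'` be a nonempty finite
subset of `G₀ × ℤⁿ` whose projection to `ℤⁿ` has `k ≥ 2` elements.  Then for every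
`r ≥ 2`, the set `A'` is an asymptotic `(r, n₀·k·b(r,k))`-approximate group. -/
theorem product_asymptotic_approximate_group {G₀ : Type*} [AddCommGroup G₀] [Fintype G₀]
    (n₀ : ℕ) (hn₀ : Fintype.card G₀ = n₀) (n : ℕ) (hn : 0 < n)
    (A' : Set (G₀ × (Fin n → ℤ))) (hA' : A'.Finite) (hne : A'.Nonempty)
    (k : ℕ) (hk : (Prod.snd '' A').ncard = k) (hk2 : 2 ≤ k)
    (r : ℕ) (hr : 2 ≤ r) :
    ∃ h₀ : ℕ, ∀ h : ℕ, h₀ ≤ h →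
      ∃ X : Finset (G₀ × (Fin n → ℤ)), X.card ≤ n₀ * k * b r k ∧
        hsum (r * h) A' ⊆ ↑X + hsum h A' :=
  product_asymptotic_approximate_group_general n₀ hn₀ n A' hA' k hk hk2 r hr
end

section
/- Every nonempty finite subset A of an abelian group G is an asymptotic approximate group: for every integer r ≥ 2 there exists a positive integer ℓ (depending on A and r) and an integer h_0 such that for every integer h ≥ h_0 there is a subset X_h of G with |X_h| ≤ ℓ and rhA ⊆ X_h + hA. -/
open Pointwise

lemma zero_mem_hsum_zero {V : Type*} [AddCommMonoid V] (A : Set V) : (0:V) ∈ hsum 0 A :=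
  ⟨Fin.elim0, fun i => i.elim0, by simp⟩

lemma add_mem_hsum_s19 {V : Type*} [AddCommMonoid V] {A : Set V} {m n : ℕ} {z w : V}
    (hz : z ∈ hsum m A) (hw : w ∈ hsum n A) : z + w ∈ hsum (m + n) A := by
  obtain ⟨f, hf, rfl⟩ := hz
  obtain ⟨g, hg, rfl⟩ := hw
  refine ⟨Fin.append f g, ?_, ?_⟩
  · intro i
    refine Fin.addCases (fun i => ?_) (fun i => ?_) i <;> simp [hf, hg]
  · rw [Fin.sum_univ_add]; simp

lemma nsmul_mem_hsum_s19 {V : Type*} [AddCommMonoid V] {A : Set V} {c : V} (hc : c ∈ A) (m : ℕ) :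
    m • c ∈ hsum m A := by
  induction m with
  | zero => simpa using zero_mem_hsum_zero A
  | succ m ih =>
    have h1 : c ∈ hsum 1 A := ⟨fun _ => c, fun _ => hc, by simp⟩
    simpa [succ_nsmul] using add_mem_hsum_s19 ih h1

lemma sum_smul_mem_hsum {V : Type*} [AddCommMonoid V] {k : ℕ} (a : Fin k → V) {A : Set V}
    (haA : ∀ i, a i ∈ A) (x : Fin k → ℕ) :
    (∑ i, x i • a i) ∈ hsum (∑ i, x i) A := by
  classical
  have H : ∀ s : Finset (Fin k), (∑ i ∈ s, x i • a i) ∈ hsum (∑ i ∈ s, x i) A := by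
    intro s
    induction s using Finset.cons_induction with
    | empty => simpa using zero_mem_hsum_zero A
    | cons i s his ih =>
      rw [Finset.sum_cons, Finset.sum_cons]
      exact add_mem_hsum_s19 (nsmul_mem_hsum_s19 (haA i) (x i)) ih
  exact H Finset.univ

lemma mem_hsum_iff {V : Type*} [AddCommMonoid V] {k : ℕ} (a : Fin k → V) (h : ℕ) (z : V) :
    z ∈ hsum h (Set.range a) ↔ ∃ x : Fin k → ℕ, (∑ i, x i) = h ∧ z = ∑ i, x i • a i := by
  classical
  constructor
  · induction h generalizing z with
    | zero =>
      rintro ⟨f, hf, rfl⟩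
      exact ⟨0, by simp, by simp⟩
    | succ m ih =>
      rintro ⟨f, hf, rfl⟩
      obtain ⟨j, hj⟩ := hf 0
      obtain ⟨x, hx1, hx2⟩ := ih (z := ∑ i : Fin m, f i.succ) ⟨fun i => f i.succ, fun i => hf _, rfl⟩
      refine ⟨fun i => x i + if i = j then 1 else 0, ?_, ?_⟩
      · rw [Finset.sum_add_distrib, hx1]; simp
      · rw [Fin.sum_univ_succ]
        simp only [add_smul, Finset.sum_add_distrib, ite_smul, one_smul, zero_smul,
          Finset.sum_ite_eq', Finset.mem_univ, if_true]
        rw [← hx2, ← hj, add_comm]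
  · rintro ⟨x, rfl, rfl⟩
    exact sum_smul_mem_hsum a (fun i => Set.mem_range_self i) x

lemma exists_sum_eq {k : ℕ} (c : Fin k → ℕ) (N : ℕ) (hN : N ≤ ∑ i, c i) :
    ∃ n : Fin k → ℕ, (∀ i, n i ≤ c i) ∧ (∑ i, n i) = N := by
  classical
  induction N with
  | zero => exact ⟨0, fun i => Nat.zero_le _, by simp⟩
  | succ N ih =>
    obtain ⟨n, hn, hs⟩ := ih (le_trans (Nat.le_succ N) hN)
    have hex : ∃ i, n i < c i := by
      by_contra hcon
      push_neg at hcon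
      have : (∑ i, c i) ≤ ∑ i, n i := Finset.sum_le_sum fun i _ => hcon i
      omega
    obtain ⟨i, hi⟩ := hex
    refine ⟨Function.update n i (n i + 1), ?_, ?_⟩
    · intro t
      rcases eq_or_ne t i with rfl | ht
      · simpa using hi
      · simp [Function.update_of_ne ht, hn t]
    · rw [Finset.sum_update_of_mem (Finset.mem_univ i), Finset.sdiff_singleton_eq_erase]
      have := Finset.add_sum_erase Finset.univ n (Finset.mem_univ i)
      omega
/-- Every nonempty finite subset of an abelian group is an asymptotic approximate
group: for every `r ≥ 2` there are `ℓ ≥ 1` and `h₀` such that for all `h ≥ h₀` there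
is a set `X_h` with `|X_h| ≤ ℓ` and `rhA ⊆ X_h + hA`. -/
theorem finite_subset_asymptotic_approximate_group {G : Type*} [AddCommGroup G]
    (A : Set G) (hA : A.Finite) (hne : A.Nonempty) (r : ℕ) (hr : 2 ≤ r) :
    ∃ ℓ : ℕ, 0 < ℓ ∧ ∃ h₀ : ℕ, ∀ h : ℕ, h₀ ≤ h →
      ∃ X : Finset G, X.card ≤ ℓ ∧ hsum (r * h) A ⊆ ↑X + hsum h A := by
  classical
  obtain ⟨k, a, ha, hk⟩ : ∃ (k : ℕ) (a : Fin k → G), Set.range a = A ∧ 0 < k := by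
    haveI := hA.fintype
    refine ⟨Fintype.card A, Subtype.val ∘ (Fintype.equivFin A).symm, ?_,
      Fintype.card_pos_iff.mpr hne.to_subtype⟩
    rw [Set.range_comp]
    simp [Equiv.range_eq_univ]
  subst ha
  obtain ⟨s, rfl⟩ : ∃ s, r = s + 1 := ⟨r - 1, by omega⟩
  have hs : 1 ≤ s := by omega
  set C : ℕ := 4 * k * (s + 1) with hC
  refine ⟨k * (C + 1) ^ k, by positivity, 4 * k, fun h hh => ?_⟩
  have hk2 : 0 < 2 * k := by omega
  set q : ℕ := h / (2 * k) with hq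
  have hq2 : 2 ≤ q := by rw [hq, Nat.le_div_iff_mul_le hk2]; omega
  have hq0 : 0 < q := by omega
  have hkq : 2 * k * q ≤ h := by
    calc 2 * k * q = q * (2 * k) := by ring
    _ ≤ h := by rw [hq]; exact Nat.div_mul_le_self h (2 * k)
  have hmodd : h < 2 * k * q + 2 * k := by
    have h1 : 2 * k * q + h % (2 * k) = h := by rw [hq]; exact Nat.div_add_mod h (2 * k)
    have h2 : h % (2 * k) < 2 * k := Nat.mod_lt _ hk2
    calc h = 2 * k * q + h % (2 * k) := h1.symm
    _ < 2 * k * q + 2 * k := Nat.add_lt_add_left h2 _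
  have hhle : h ≤ 2 * (2 * k * q) := by
    have h3 : 2 * k ≤ 2 * k * q := Nat.le_mul_of_pos_right _ hq0
    calc h ≤ 2 * k * q + 2 * k := le_of_lt hmodd
    _ ≤ 2 * k * q + 2 * k * q := Nat.add_le_add_left h3 _
    _ = 2 * (2 * k * q) := (two_mul _).symm
  have hTq : s * h ≤ C * q := by
    calc s * h ≤ (s + 1) * h := Nat.mul_le_mul_right h (by omega)
    _ ≤ (s + 1) * (2 * (2 * k * q)) := Nat.mul_le_mul_left _ hhle
    _ = C * q := by rw [hC]; ring
  set F : Fin k × (Fin k → Fin (C + 1)) → G := fun p =>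
    (∑ i, (q * (p.2 i : ℕ)) • a i) + (s * h - q * ∑ i, (p.2 i : ℕ)) • a p.1 with hF
  refine ⟨Finset.image F Finset.univ, ?_, ?_⟩
  · calc (Finset.image F Finset.univ).card ≤ (Finset.univ : Finset (Fin k × (Fin k → Fin (C + 1)))).card :=
        Finset.card_image_le
    _ = k * (C + 1) ^ k := by simp [Finset.card_univ]
  intro z hz
  rw [mem_hsum_iff] at hz
  obtain ⟨x, hxsum, rfl⟩ := hz
  haveI : Nonempty (Fin k) := ⟨⟨0, hk⟩⟩
  obtain ⟨j, -, hj⟩ := Finset.exists_max_image Finset.univ x Finset.univ_nonempty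
  have hkxj : (s + 1) * h ≤ k * x j := by
    calc (s + 1) * h = ∑ i, x i := hxsum.symm
    _ ≤ ∑ _i : Fin k, x j := Finset.sum_le_sum fun i _ => hj i (Finset.mem_univ i)
    _ = k * x j := by simp [Finset.sum_const, Finset.card_univ, mul_comm]
  have hxj4 : 4 * q ≤ x j := by
    have hmain : k * (4 * q) ≤ k * x j := by
      calc k * (4 * q) = 2 * (2 * k * q) := by ring
      _ ≤ 2 * h := Nat.mul_le_mul_left 2 hkq
      _ ≤ (s + 1) * h := Nat.mul_le_mul_right h (by omega)
      _ ≤ k * x j := hkxj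
    exact Nat.le_of_mul_le_mul_left hmain hk
  set c : Fin k → ℕ := fun i => if i = j then 0 else x i / q with hc
  set S : ℕ := ∑ i, c i with hS
  set N : ℕ := min S (s * h / q) with hN
  have hNS : N ≤ S := min_le_left _ _
  have hNC : N ≤ C := by
    calc N ≤ s * h / q := min_le_right _ _
    _ ≤ C * q / q := Nat.div_le_div_right hTq
    _ = C := Nat.mul_div_cancel _ hq0
  have hqN : q * N ≤ s * h := by
    calc q * N ≤ q * (s * h / q) := Nat.mul_le_mul_left q (min_le_right _ _)
    _ = (s * h / q) * q := mul_comm _ _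
    _ ≤ s * h := Nat.div_mul_le_self _ _
  have hkey : s * h - q * N ≤ x j := by
    rcases le_total S (s * h / q) with hcase | hcase
    · have hNeq : N = S := min_eq_left hcase
      have hSsum : (s + 1) * h ≤ x j + q * S + 2 * k * q := by
        have h1 : x j + ∑ i ∈ Finset.univ.erase j, x i = ∑ i, x i :=
          Finset.add_sum_erase Finset.univ x (Finset.mem_univ j)
        have h2 : ∀ i ∈ Finset.univ.erase j, x i ≤ q * c i + q := by
          intro i hi
          have hij : i ≠ j := Finset.ne_of_mem_erase hi
          have hd : q * (x i / q) + x i % q = x i := Nat.div_add_mod (x i) q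
          have hm : x i % q < q := Nat.mod_lt _ hq0
          have hci : c i = x i / q := by simp [hc, hij]
          rw [hci]
          calc x i = q * (x i / q) + x i % q := hd.symm
          _ ≤ q * (x i / q) + q := Nat.add_le_add_left (le_of_lt hm) _
        have hce : ∑ i ∈ Finset.univ.erase j, c i = S := by
          have h3 : c j + ∑ i ∈ Finset.univ.erase j, c i = ∑ i, c i :=
            Finset.add_sum_erase Finset.univ c (Finset.mem_univ j)
          have h4 : c j = 0 := by simp [hc]
          rw [hS]
          omega
        have h5 : ∑ i ∈ Finset.univ.erase j, x i ≤ q * S + 2 * k * q := by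
          calc ∑ i ∈ Finset.univ.erase j, x i ≤ ∑ i ∈ Finset.univ.erase j, (q * c i + q) :=
            Finset.sum_le_sum h2
          _ = q * (∑ i ∈ Finset.univ.erase j, c i) + (Finset.univ.erase j).card * q := by
            rw [Finset.sum_add_distrib, Finset.mul_sum, Finset.sum_const, smul_eq_mul]
          _ ≤ q * S + 2 * k * q := by
            refine Nat.add_le_add (by rw [hce]) (Nat.mul_le_mul_right q ?_)
            calc (Finset.univ.erase j).card ≤ (Finset.univ : Finset (Fin k)).card :=
              Finset.card_le_card (Finset.erase_subset _ _)
            _ = k := by simp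
            _ ≤ 2 * k := by omega
        calc (s + 1) * h = ∑ i, x i := hxsum.symm
        _ = x j + ∑ i ∈ Finset.univ.erase j, x i := h1.symm
        _ ≤ x j + (q * S + 2 * k * q) := Nat.add_le_add_left h5 _
        _ = x j + q * S + 2 * k * q := by ring
      have h6 : s * h + h ≤ x j + q * S + h := by
        calc s * h + h = (s + 1) * h := by ring
        _ ≤ x j + q * S + 2 * k * q := hSsum
        _ ≤ x j + q * S + h := Nat.add_le_add_left hkq _
      have h7 : s * h ≤ x j + q * S := Nat.le_of_add_le_add_right h6
      rw [hNeq, Nat.sub_le_iff_le_add]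
      exact h7
    · have hNeq : N = s * h / q := min_eq_right hcase
      have hd : q * (s * h / q) + (s * h) % q = s * h := Nat.div_add_mod _ _
      have hm : (s * h) % q < q := Nat.mod_lt _ hq0
      rw [hNeq, Nat.sub_le_iff_le_add]
      calc s * h = q * (s * h / q) + (s * h) % q := hd.symm
      _ ≤ q * (s * h / q) + q := Nat.add_le_add_left (le_of_lt hm) _
      _ ≤ q * (s * h / q) + x j := Nat.add_le_add_left (le_trans (by omega) hxj4) _
      _ = x j + q * (s * h / q) := add_comm _ _
  obtain ⟨n, hnle, hnsum⟩ := exists_sum_eq c N (by rw [← hS]; exact hNS)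
  have hnj : n j = 0 := by
    have h1 := hnle j
    simpa [hc] using h1
  have hniC : ∀ i, n i ≤ C := fun i =>
    le_trans (le_trans (Finset.single_le_sum (fun t _ => Nat.zero_le (n t)) (Finset.mem_univ i))
      (le_of_eq hnsum)) hNC
  set u : Fin k → ℕ := fun i => q * n i + if i = j then s * h - q * N else 0 with hu
  have hule : ∀ i, u i ≤ x i := by
    intro i
    rcases eq_or_ne i j with rfl | hij
    · simpa [hu, hnj] using hkey
    · have hci : c i = x i / q := by simp [hc, hij]
      calc u i = q * n i := by simp [hu, hij]
      _ ≤ q * (x i / q) := by rw [← hci]; exact Nat.mul_le_mul_left q (hnle i)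
      _ = (x i / q) * q := mul_comm _ _
      _ ≤ x i := Nat.div_mul_le_self _ _
  set v : Fin k → ℕ := fun i => x i - u i with hv
  have hxuv : ∀ i, x i = u i + v i := by
    intro i
    have h1 := hule i
    simp only [hv]
    omega
  have hsumu : ∑ i, u i = s * h := by
    have h1 : ∑ i, u i = q * N + (s * h - q * N) := by
      simp only [hu]
      rw [Finset.sum_add_distrib, ← Finset.mul_sum, hnsum]
      congr 1
      rw [Finset.sum_ite_eq' Finset.univ j fun _ => s * h - q * N]
      simp
    rw [h1]
    exact Nat.add_sub_cancel' hqN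
  have hsumv : ∑ i, v i = h := by
    have h1 : ∑ i, x i = ∑ i, u i + ∑ i, v i := by
      rw [← Finset.sum_add_distrib]
      exact Finset.sum_congr rfl fun i _ => hxuv i
    rw [hxsum, hsumu] at h1
    have h2 : (s + 1) * h = s * h + h := by ring
    have h3 : s * h + h = s * h + ∑ i, v i := h2.symm.trans h1
    exact (Nat.add_left_cancel h3).symm
  have hdecomp : (∑ i, x i • a i) = (∑ i, u i • a i) + ∑ i, v i • a i := by
    rw [← Finset.sum_add_distrib]
    refine Finset.sum_congr rfl fun i _ => ?_
    rw [hxuv i, add_smul]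
  have huw : (∑ i, u i • a i) = (∑ i, (q * n i) • a i) + (s * h - q * N) • a j := by
    simp only [hu, add_smul, ite_smul, zero_smul]
    rw [Finset.sum_add_distrib]
    congr 1
    rw [Finset.sum_ite_eq' Finset.univ j fun i => (s * h - q * N) • a i]
    simp
  refine Set.mem_add.mpr ⟨(∑ i, (q * n i) • a i) + (s * h - q * N) • a j, ?_,
    ∑ i, v i • a i, ?_, ?_⟩
  · refine Finset.mem_coe.mpr (Finset.mem_image.mpr
      ⟨(j, fun i => ⟨n i, Nat.lt_succ_of_le (hniC i)⟩), Finset.mem_univ _, ?_⟩)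
    simp only [hF, hnsum]
  · have hmem := sum_smul_mem_hsum a (fun i => Set.mem_range_self i) v
    rwa [hsumv] at hmem
  · rw [← huw]
    exact hdecomp.symm
end
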